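/- arXiv:2603.18471 — 2 statements merged into one kernel-verified Lean document; each statement's English description precedes it below -/
import Mathlib

section
/- Let k > 1 and let (v,u) ∈ A be an edge such that l_p ≥ 1 if v ∈ B and l_c ≥ 1 if v ∉ B. Then F_{k,1}^{vu} equals the union of (i) the sets ⋃_{v' ∈ B, u' ∈ V∖B, 1 ≤ l' ≤ l_p} F_{k−1,l'}^{v'u'} ⊎ {v,u} and (ii) the sets ⋃_{v' ∈ V∖B, 1 ≤ l' ≤ l_c} F_{k−1,l'}^{v'v'} ⊎ {v,u}. -/
/-!
The arc `(v,u)` is the only `D_1^{vu}`, and it is semi-feasible, so removing it from a packing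
counted by `F_{k,1}^{vu}` is a bijection onto the feasible packings of total length `k - 1` that
avoid `{v,u}`. Such a packing is nonempty since `k - 1 ≥ 1`, and any one of its elements can serve
as the distinguished element: a feasible path from `v' ∈ B` ends outside `B` because no arc enters
`B`, giving family (i), and a feasible cycle gives family (ii). Conversely the distinguished
element of a packing in (i) or (ii) starts in `B` or is a cycle, so it is feasible.
-/

/-- An element of a path-cycle packing: a list of vertices together with a flag
telling whether it is a cycle (`true`) or a path (`false`). -/
structure PCElem (V : Type*) where
  verts : List V
  isCycle : Bool

/-- A valid element w.r.t. the arc relation `A`: the vertices are distinct,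
consecutive vertices are joined by arcs, there are at least two vertices
(so paths have length ≥ 1 and cycles have length ≥ 2), and for a cycle the
last vertex is joined back to the first. -/
def ValidElem {V : Type*} (A : V → V → Prop) (e : PCElem V) : Prop :=
  e.verts.Nodup ∧ e.verts.Chain' A ∧ 2 ≤ e.verts.length ∧
    (e.isCycle = true → ∀ h : e.verts ≠ [], A (e.verts.getLast h) (e.verts.head h))

/-- The length (number of arcs) of an element: a cycle on `k` vertices has length `k`,
a path on `k` vertices has length `k - 1`. -/
def elemLen {V : Type*} (e : PCElem V) : ℕ :=
  if e.isCycle then e.verts.length else e.verts.length - 1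

/-- The vertex set of an element. -/
def elemVerts {V : Type*} [DecidableEq V] (e : PCElem V) : Finset V :=
  e.verts.toFinset

/-- A path-cycle packing: a finite set of valid, pairwise vertex-disjoint
paths and cycles. -/
def IsPacking {V : Type*} [DecidableEq V] (A : V → V → Prop)
    (D : Finset (PCElem V)) : Prop :=
  (∀ e ∈ D, ValidElem A e) ∧
    (D : Set (PCElem V)).Pairwise fun e f => Disjoint (elemVerts e) (elemVerts f)

/-- `c(D)`: the total length of a packing. -/
def packLen {V : Type*} (D : Finset (PCElem V)) : ℕ :=
  ∑ e ∈ D, elemLen e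

/-- `V(D)`: the set of vertices appearing in a packing. -/
def packVerts {V : Type*} [DecidableEq V] (D : Finset (PCElem V)) : Finset V :=
  D.biUnion elemVerts

/-- A feasible path: starts at an altruistic vertex of `B` and has length at most `lp`. -/
def FeasPath {V : Type*} (B : Set V) (lp : ℕ) (e : PCElem V) : Prop :=
  e.isCycle = false ∧ (∃ b ∈ B, e.verts.head? = some b) ∧ e.verts.length - 1 ≤ lp

/-- A feasible cycle: contains no vertex of `B` and has length at most `lc`. -/
def FeasCycle {V : Type*} (B : Set V) (lc : ℕ) (e : PCElem V) : Prop :=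
  e.isCycle = true ∧ (∀ w ∈ e.verts, w ∉ B) ∧ e.verts.length ≤ lc

/-- A feasible element: a feasible path or a feasible cycle. -/
def FeasElem {V : Type*} (B : Set V) (lp lc : ℕ) (e : PCElem V) : Prop :=
  FeasPath B lp e ∨ FeasCycle B lc e

/-- A feasible path-cycle packing. -/
def FeasPacking {V : Type*} [DecidableEq V] (A : V → V → Prop) (B : Set V)
    (lp lc : ℕ) (D : Finset (PCElem V)) : Prop :=
  IsPacking A D ∧ ∀ e ∈ D, FeasElem B lp lc e

/-- A semi-feasible element: a feasible path, a feasible cycle, or a path of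
length at most `lc` containing no vertex of `B`. -/
def SemiElem {V : Type*} (B : Set V) (lp lc : ℕ) (e : PCElem V) : Prop :=
  FeasElem B lp lc e ∨
    (e.isCycle = false ∧ (∀ w ∈ e.verts, w ∉ B) ∧ e.verts.length - 1 ≤ lc)

/-- `e` is a `D_l^{vu}`: a path of length `l` from `v` to `u` when `v ≠ u`, and a
cycle of length `l` through `v` when `v = u`. -/
def IsDlvu {V : Type*} [DecidableEq V] (v u : V) (l : ℕ) (e : PCElem V) : Prop :=
  if v = u then
    e.isCycle = true ∧ v ∈ e.verts ∧ e.verts.length = l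
  else
    e.isCycle = false ∧ e.verts.head? = some v ∧ e.verts.getLast? = some u ∧
      e.verts.length = l + 1

/-- `F_{k,l}^{vu}`: the collection of vertex sets `V(D)` over all semi-feasible
packings `D = P ∪ C ∪ {D_l^{vu}}` with `c(D) = k`; the distinguished element
`D_l^{vu}` is semi-feasible and every other element is feasible. -/
def FF {V : Type*} [DecidableEq V] (A : V → V → Prop) (B : Set V) (lp lc : ℕ)
    (k l : ℕ) (v u : V) : Set (Finset V) :=
  { S | ∃ (D : Finset (PCElem V)) (e : PCElem V),
      IsPacking A D ∧ e ∈ D ∧ IsDlvu v u l e ∧ SemiElem B lp lc e ∧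
      (∀ f ∈ D, f ≠ e → FeasElem B lp lc f) ∧ packLen D = k ∧ packVerts D = S }

/-- `F ⊎ T = { X ∪ T : X ∈ F, X ∩ T = ∅ }` for a collection of finite sets. -/
def uplusS {V : Type*} [DecidableEq V] (F : Set (Finset V)) (T : Finset V) :
    Set (Finset V) :=
  { Z | ∃ X ∈ F, Disjoint X T ∧ Z = X ∪ T }


section Elements

variable {V : Type*} {A : V → V → Prop} {B : Set V} {lp lc : ℕ}

theorem ValidElem.verts_ne_nil {f : PCElem V} (hf : ValidElem A f) : f.verts ≠ [] := by
  intro h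
  simpa [h] using hf.2.2.1

theorem ValidElem.getLast_notMem (hB : ∀ v u, A v u → u ∉ B) {f : PCElem V}
    (hf : ValidElem A f) (h : f.verts ≠ []) : f.verts.getLast h ∉ B :=
  hB _ _ (hf.2.1.rel_getLast_dropLast (by grind [List.length_dropLast, hf.2.2.1]))

theorem validElem_pair {v u : V} (hvu : A v u) (hne : v ≠ u) :
    ValidElem A ⟨[v, u], false⟩ :=
  ⟨by simp [hne], List.isChain_pair.2 hvu, by simp, by simp⟩

theorem semiElem_pair {v u : V} (huB : u ∉ B) (hvB : v ∈ B → 1 ≤ lp)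
    (hvB' : v ∉ B → 1 ≤ lc) : SemiElem B lp lc ⟨[v, u], false⟩ := by
  by_cases hv : v ∈ B
  · exact Or.inl (Or.inl ⟨rfl, ⟨v, hv, rfl⟩, by simpa using hvB hv⟩)
  · exact Or.inr ⟨rfl, by simp [hv, huB], by simpa using hvB' hv⟩

theorem SemiElem.feasElem {e : PCElem V} (hs : SemiElem B lp lc e)
    (h : e.isCycle = true ∨ ∃ b ∈ e.verts, b ∈ B) : FeasElem B lp lc e := by
  rcases hs with hs | ⟨hc, hnB, -⟩
  · exact hs
  · rcases h with h | ⟨b, hb, hbB⟩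
    · simp [hc] at h
    · exact absurd hbB (hnB b hb)

end Elements

section Packings

variable {V : Type*} [DecidableEq V] {A : V → V → Prop}

theorem IsDlvu.elemLen_eq {v u : V} {l : ℕ} {e : PCElem V} (h : IsDlvu v u l e) :
    elemLen e = l := by
  unfold IsDlvu at h
  split_ifs at h with hvu
  · simp [elemLen, h.1, h.2.2]
  · simp [elemLen, h.1, h.2.2.2]

theorem isDlvu_one_iff {v u : V} (hne : v ≠ u) {f : PCElem V} :
    IsDlvu v u 1 f ↔ f = ⟨[v, u], false⟩ := by
  rcases f with ⟨verts, c⟩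
  rw [IsDlvu, if_neg hne]
  constructor
  · rintro ⟨rfl, hhead, hlast, hlen⟩
    match verts, hlen with
    | [a, b], _ => simp_all
  · rintro ⟨⟩
    simp

theorem isDlvu_of_isCycle_eq_false {f : PCElem V} (hc : f.isCycle = false) (h : f.verts ≠ [])
    (hne : f.verts.head h ≠ f.verts.getLast h) :
    IsDlvu (f.verts.head h) (f.verts.getLast h) (elemLen f) f := by
  have := List.length_pos_iff.2 h
  rw [IsDlvu, if_neg hne]
  exact ⟨hc, List.head?_eq_some_head h, List.getLast?_eq_some_getLast h, by simp [elemLen, hc]; omega⟩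

theorem isDlvu_of_isCycle {f : PCElem V} (hc : f.isCycle = true) (h : f.verts ≠ []) :
    IsDlvu (f.verts.head h) (f.verts.head h) (elemLen f) f := by
  rw [IsDlvu, if_pos rfl]
  exact ⟨hc, List.head_mem h, by simp [elemLen, hc]⟩

theorem IsPacking.subset {D D' : Finset (PCElem V)} (hD : IsPacking A D) (hsub : D' ⊆ D) :
    IsPacking A D' :=
  ⟨fun e he => hD.1 e (hsub he), hD.2.mono (Finset.coe_subset.2 hsub)⟩

theorem IsPacking.insert [DecidableEq (PCElem V)] {D : Finset (PCElem V)} {e : PCElem V}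
    (hD : IsPacking A D) (he : ValidElem A e) (hdisj : Disjoint (elemVerts e) (packVerts D)) :
    IsPacking A (insert e D) := by
  have hdisj' : ∀ g ∈ D, Disjoint (elemVerts e) (elemVerts g) := fun g hg =>
    hdisj.mono_right (Finset.subset_biUnion_of_mem elemVerts hg)
  refine ⟨Finset.forall_mem_insert _ _ _ |>.2 ⟨he, hD.1⟩, ?_⟩
  rw [Finset.coe_insert, Set.pairwise_insert]
  exact ⟨hD.2, fun g hg _ => ⟨hdisj' g hg, (hdisj' g hg).symm⟩⟩

theorem IsPacking.disjoint_packVerts_erase [DecidableEq (PCElem V)] {D : Finset (PCElem V)}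
    {e : PCElem V} (hD : IsPacking A D) (he : e ∈ D) :
    Disjoint (elemVerts e) (packVerts (D.erase e)) := by
  refine (Finset.disjoint_biUnion_right _ _ _).2 fun g hg => ?_
  exact hD.2 he (Finset.mem_of_mem_erase hg) (Finset.ne_of_mem_erase hg).symm

theorem packVerts_insert [DecidableEq (PCElem V)] (D : Finset (PCElem V)) (e : PCElem V) :
    packVerts (insert e D) = elemVerts e ∪ packVerts D :=
  Finset.biUnion_insert

theorem ValidElem.notMem_of_disjoint {D : Finset (PCElem V)} {e : PCElem V}
    (he : ValidElem A e) (hdisj : Disjoint (packVerts D) (elemVerts e)) : e ∉ D := by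
  intro heD
  obtain ⟨w, hw⟩ := List.exists_mem_of_ne_nil _ he.verts_ne_nil
  have hw' : w ∈ elemVerts e := List.mem_toFinset.2 hw
  exact Finset.disjoint_left.1 hdisj (Finset.mem_biUnion.2 ⟨e, heD, hw'⟩) hw'

end Packings

section Families

variable {V : Type*} [DecidableEq V] {A : V → V → Prop} {B : Set V} {lp lc : ℕ}

def feasVertSets (A : V → V → Prop) (B : Set V) (lp lc k : ℕ) : Set (Finset V) :=
  { S | ∃ D : Finset (PCElem V), FeasPacking A B lp lc D ∧ packLen D = k ∧ packVerts D = S }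

theorem uplusS_union (F G : Set (Finset V)) (T : Finset V) :
    uplusS (F ∪ G) T = uplusS F T ∪ uplusS G T := by
  ext Z
  simp only [uplusS, Set.mem_union, Set.mem_ofPred_eq]
  grind

theorem uplusS_iUnion {ι : Sort*} (F : ι → Set (Finset V)) (T : Finset V) :
    uplusS (⋃ i, F i) T = ⋃ i, uplusS (F i) T := by
  ext Z
  simp only [uplusS, Set.mem_iUnion, Set.mem_ofPred_eq]
  grind

theorem mem_FF_of_feasPacking {D : Finset (PCElem V)} {f : PCElem V} {v u : V} {l : ℕ}
    (hD : FeasPacking A B lp lc D) (hf : f ∈ D) (hdl : IsDlvu v u l f) :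
    packVerts D ∈ FF A B lp lc (packLen D) l v u :=
  ⟨D, f, hD.1, hf, hdl, Or.inl (hD.2 f hf), fun g hg _ => hD.2 g hg, rfl, rfl⟩

/-- A semi-feasible `D_l^{vu}` can only fail to be feasible when it is a path avoiding `B`. -/
theorem FF_subset_feasVertSets {k l : ℕ} {v u : V} (h : v = u ∨ v ∈ B) :
    FF A B lp lc k l v u ⊆ feasVertSets A B lp lc k := by
  rintro S ⟨D, e, hD, he, hdl, hsemi, hfeas, rfl, rfl⟩
  have hefeas : FeasElem B lp lc e := by
    refine hsemi.feasElem ?_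
    unfold IsDlvu at hdl
    split_ifs at hdl with hvu
    · exact Or.inl hdl.1
    · exact Or.inr ⟨v, List.mem_of_mem_head? hdl.2.1, h.resolve_left hvu⟩
  refine ⟨D, ⟨hD, fun f hf => ?_⟩, rfl, rfl⟩
  by_cases hfe : f = e
  · exact hfe ▸ hefeas
  · exact hfeas f hf hfe

theorem iUnion_FF_eq_feasVertSets (hB : ∀ v u, A v u → u ∉ B) {k : ℕ} (hk : 1 ≤ k) :
    (⋃ (v' : V) (_ : v' ∈ B) (u' : V) (_ : u' ∉ B) (l' : ℕ) (_ : 1 ≤ l') (_ : l' ≤ lp),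
        FF A B lp lc k l' v' u') ∪
      (⋃ (v' : V) (_ : v' ∉ B) (l' : ℕ) (_ : 1 ≤ l') (_ : l' ≤ lc), FF A B lp lc k l' v' v') =
      feasVertSets A B lp lc k := by
  apply subset_antisymm
  · simp only [Set.union_subset_iff, Set.iUnion_subset_iff]
    exact ⟨fun v' hv' _ _ _ _ _ => FF_subset_feasVertSets (Or.inr hv'),
      fun _ _ _ _ _ => FF_subset_feasVertSets (Or.inl rfl)⟩
  rintro S ⟨D, hD, rfl, rfl⟩
  obtain ⟨f, hf⟩ : D.Nonempty := by
    rw [Finset.nonempty_iff_ne_empty]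
    rintro rfl
    simp [packLen] at hk
  have hvalid := hD.1.1 f hf
  have hne := hvalid.verts_ne_nil
  have hlen := hvalid.2.2.1
  simp only [Set.mem_union, Set.mem_iUnion]
  rcases hD.2 f hf with ⟨hc, ⟨b, hbB, hb⟩, hlp⟩ | ⟨hc, hnB, hlc⟩
  · have hhead : f.verts.head hne = b := by simpa [List.head?_eq_some_head hne] using hb
    have hlast := hvalid.getLast_notMem hB hne
    have hdl := isDlvu_of_isCycle_eq_false hc hne (by rw [hhead]; rintro rfl; exact hlast hbB)
    refine Or.inl ⟨_, hhead ▸ hbB, _, hlast, elemLen f, ?_, ?_, mem_FF_of_feasPacking hD hf hdl⟩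
      <;> simp only [elemLen, hc, Bool.false_eq_true, ↓reduceIte] <;> omega
  · refine Or.inr ⟨_, hnB _ (List.head_mem hne), elemLen f, ?_, ?_,
      mem_FF_of_feasPacking hD hf (isDlvu_of_isCycle hc hne)⟩
      <;> simp only [elemLen, hc, ↓reduceIte] <;> omega

theorem FF_eq_uplusS_of_isDlvu_iff {v u : V} {k l : ℕ} {e : PCElem V} (he : ValidElem A e)
    (hsemi : SemiElem B lp lc e) (hdl : ∀ f, IsDlvu v u l f ↔ f = e) :
    FF A B lp lc (k + l) l v u = uplusS (feasVertSets A B lp lc k) (elemVerts e) := by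
  classical
  have hlen : elemLen e = l := ((hdl e).2 rfl).elemLen_eq
  ext S
  constructor
  · rintro ⟨D, f, hD, hf, hfdl, -, hfeas, hk, rfl⟩
    obtain rfl := (hdl f).1 hfdl
    have hrest : FeasPacking A B lp lc (D.erase f) := ⟨hD.subset (Finset.erase_subset _ _),
      fun g hg => hfeas g (Finset.mem_of_mem_erase hg) (Finset.ne_of_mem_erase hg)⟩
    refine ⟨_, ⟨D.erase f, hrest, ?_, rfl⟩, (hD.disjoint_packVerts_erase hf).symm, ?_⟩
    · have := Finset.add_sum_erase D elemLen hf
      unfold packLen at hk ⊢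
      omega
    · rw [← Finset.union_comm, ← packVerts_insert, Finset.insert_erase hf]
  · rintro ⟨_, ⟨D, hD, rfl, rfl⟩, hdisj, rfl⟩
    refine ⟨insert e D, e, hD.1.insert he hdisj.symm, Finset.mem_insert_self _ _, (hdl e).2 rfl,
      hsemi, fun g hg hge => hD.2 g ((Finset.mem_insert.1 hg).resolve_left hge), ?_, ?_⟩
    · rw [packLen, Finset.sum_insert (he.notMem_of_disjoint hdisj), hlen, packLen, add_comm]
    · rw [packVerts_insert, Finset.union_comm]

end Families

theorem FF_recurrence_new_edge_general {V : Type*} [DecidableEq V]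
    (A : V → V → Prop) (B : Set V) (lp lc : ℕ)
    (hloop : ∀ v, ¬ A v v) (hB : ∀ v u, A v u → u ∉ B)
    (k : ℕ) (v u : V) (hk : 1 < k) (hvu : A v u)
    (hvB : v ∈ B → 1 ≤ lp) (hvB' : v ∉ B → 1 ≤ lc) :
    FF A B lp lc k 1 v u =
      (⋃ (v' : V) (_ : v' ∈ B) (u' : V) (_ : u' ∉ B)
          (l' : ℕ) (_ : 1 ≤ l') (_ : l' ≤ lp),
        uplusS (FF A B lp lc (k - 1) l' v' u') {v, u}) ∪
      (⋃ (v' : V) (_ : v' ∉ B) (l' : ℕ) (_ : 1 ≤ l') (_ : l' ≤ lc),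
        uplusS (FF A B lp lc (k - 1) l' v' v') {v, u}) := by
  have hne : v ≠ u := fun h => hloop v (h ▸ hvu)
  obtain ⟨m, rfl⟩ : ∃ m, k = m + 1 := ⟨k - 1, by omega⟩
  have hedge : elemVerts ⟨[v, u], false⟩ = ({v, u} : Finset V) := by simp [elemVerts]
  rw [FF_eq_uplusS_of_isDlvu_iff (validElem_pair hvu hne)
      (semiElem_pair (hB v u hvu) hvB hvB') (fun _ => isDlvu_one_iff hne), hedge,
    Nat.add_sub_cancel, ← iUnion_FF_eq_feasVertSets hB (by omega : 1 ≤ m)]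
  simp only [uplusS_union, uplusS_iUnion]

/-- (Case (ii) of the DP recurrence) For `k > 1` and an arc `(v,u) ∈ A` with
`l_p ≥ 1` if `v ∈ B` and `l_c ≥ 1` if `v ∉ B`:
`F_{k,1}^{vu}` equals the union over feasible-path indices and feasible-cycle
indices of the corresponding families `⊎ {v,u}`. -/
theorem FF_recurrence_new_edge {V : Type*} [Fintype V] [DecidableEq V]
    (A : V → V → Prop) (B : Set V) (lp lc : ℕ)
    (hloop : ∀ v, ¬ A v v) (hB : ∀ v u, A v u → u ∉ B)
    (k : ℕ) (v u : V) (hk : 1 < k) (hvu : A v u)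
    (hvB : v ∈ B → 1 ≤ lp) (hvB' : v ∉ B → 1 ≤ lc) :
    FF A B lp lc k 1 v u =
      (⋃ (v' : V) (_ : v' ∈ B) (u' : V) (_ : u' ∉ B)
          (l' : ℕ) (_ : 1 ≤ l') (_ : l' ≤ lp),
        uplusS (FF A B lp lc (k - 1) l' v' u') {v, u}) ∪
      (⋃ (v' : V) (_ : v' ∉ B) (l' : ℕ) (_ : 1 ≤ l') (_ : l' ≤ lc),
        uplusS (FF A B lp lc (k - 1) l' v' v') {v, u}) :=
  FF_recurrence_new_edge_general A B lp lc hloop hB k v u hk hvu hvB hvB'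
end

section
/- Let t be a positive integer and assume l_p < t and l_c < t. Suppose that for every tuple (k,l,p,v,u) with 1 ≤ k ≤ p ≤ 2t, 1 ≤ l ≤ max(l_p,l_c), v ∈ V and u ∈ V∖B, a subfamily F̂_{k,l,p}^{vu} ⊆ F_{k,l,p}^{vu} is given that is (2t−p)-representative for F_{k,l,p}^{vu}. Then there exists a feasible path-cycle packing of total length at least t if and only if there exists a tuple (k,l,p,v,u) with F̂_{k,l,p}^{vu} ≠ ∅ such that either (t ≤ k ≤ p ≤ 2t, v ∈ B, u ∈ V∖B and l ≤ l_p) or (t ≤ k ≤ p ≤ 2t, v = u ∈ V∖B and l ≤ l_c). -/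
/-- `F_{k,l,p}^{vu}`: the members of `F_{k,l}^{vu}` of cardinality `p`. -/
def FFp {V : Type*} [DecidableEq V] (A : V → V → Prop) (B : Set V) (lp lc : ℕ)
    (k l p : ℕ) (v u : V) : Set (Finset V) :=
  { S | S ∈ FF A B lp lc k l v u ∧ S.card = p }

/-- `Shat` is a `q`-representative subfamily of the family `S` of finite sets:
`Shat ⊆ S` and for every set `Y` of size at most `q`, if some `X ∈ S` is disjoint
from `Y`, then some `X̂ ∈ Shat` is disjoint from `Y`. -/
def IsRepS {V : Type*} [DecidableEq V] (q : ℕ) (Shat S : Set (Finset V)) : Prop :=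
  Shat ⊆ S ∧ ∀ Y : Finset V, Y.card ≤ q →
    (∃ X ∈ S, Disjoint X Y) → ∃ Xhat ∈ Shat, Disjoint Xhat Y

/-!
An inclusion-minimal feasible packing `D` of length `k ≥ t` has all its elements shorter than
`t`, so each of them is longer than the surplus `k - t`; counting gives `|V(D)| ≤ k + |D| ≤ 2t`.
Any element of `D` then witnesses `V(D) ∈ F_{k,l,p}^{vu}`, and representativeness with `Y = ∅`
makes `F̂_{k,l,p}^{vu}` nonempty. Conversely, when `v ∈ B` (a path) or `v = u` (a cycle), the
distinguished element of a packing in `F_{k,l}^{vu}` is itself feasible.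
-/

theorem Finset.exists_minimal_subset_le_sum {α : Type*} (f : α → ℕ) (t : ℕ) (s : Finset α)
    (hs : t ≤ ∑ e ∈ s, f e) :
    ∃ s' ⊆ s, t ≤ ∑ e ∈ s', f e ∧ ∀ e ∈ s', ∑ x ∈ s', f x < t + f e := by
  classical
  induction s using Finset.strongInduction with
  | H s ih =>
    by_cases hdrop : ∃ e ∈ s, t + f e ≤ ∑ x ∈ s, f x
    · obtain ⟨e, he, hle⟩ := hdrop
      have hsum : ∑ x ∈ s.erase e, f x + f e = ∑ x ∈ s, f x := Finset.sum_erase_add s f he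
      obtain ⟨s', hsub, hs'⟩ := ih (s.erase e) (Finset.erase_ssubset he) (by omega)
      exact ⟨s', hsub.trans (Finset.erase_subset e s), hs'⟩
    · simp only [not_exists, not_and, not_le] at hdrop
      exact ⟨s, subset_rfl, hs, hdrop⟩

theorem Finset.sum_add_card_le_two_mul {α : Type*} {s : Finset α} {f : α → ℕ} {t : ℕ}
    (hle : t ≤ ∑ e ∈ s, f e) (hlt : ∀ e ∈ s, f e < t)
    (hmin : ∀ e ∈ s, ∑ x ∈ s, f x < t + f e) : ∑ e ∈ s, f e + s.card ≤ 2 * t := by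
  obtain ⟨r, hr⟩ : ∃ r, ∑ e ∈ s, f e = t + r := ⟨_, (Nat.add_sub_of_le hle).symm⟩
  rcases s.eq_empty_or_nonempty with rfl | ⟨e, he⟩
  · simp only [Finset.sum_empty, Finset.card_empty] at hr ⊢
    omega
  -- every term exceeds the surplus `r`
  have hcard : s.card * (r + 1) ≤ t + r := by
    rw [← hr, ← smul_eq_mul]
    exact s.card_nsmul_le_sum f _ fun x hx => by have := hmin x hx; omega
  have hr2 : r + 2 ≤ t := by have := hmin e he; have := hlt e he; omega
  have hpos : 1 ≤ s.card := Finset.card_pos.2 ⟨e, he⟩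
  rw [hr]
  nlinarith

section Elements

variable {V : Type*} {A : V → V → Prop} {B : Set V} {lp lc l : ℕ} {e : PCElem V}

theorem ValidElem.verts_ne_nil_s12 (he : ValidElem A e) : e.verts ≠ [] := by
  intro h
  simpa [h] using he.2.2.1

theorem ValidElem.one_le_elemLen (he : ValidElem A e) : 1 ≤ elemLen e := by
  have := he.2.2.1
  unfold elemLen
  split <;> omega

theorem ValidElem.getLast_notMem_s12 (hB : ∀ v u, A v u → u ∉ B) (he : ValidElem A e) :
    e.verts.getLast he.verts_ne_nil_s12 ∉ B := by
  have hne : e.verts.dropLast ≠ [] := by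
    rw [← List.length_pos_iff, List.length_dropLast]
    have := he.2.2.1
    omega
  exact hB _ _ (he.2.1.rel_getLast_dropLast hne)

theorem FeasElem.elemLen_le_max (he : FeasElem B lp lc e) : elemLen e ≤ max lp lc := by
  rcases he with ⟨hc, -, hl⟩ | ⟨hc, -, hl⟩ <;>
    simp only [elemLen, hc, Bool.false_eq_true, if_true, if_false] <;> omega

section DecidableEq

variable [DecidableEq V]

theorem ValidElem.card_elemVerts (he : ValidElem A e) : (elemVerts e).card = e.verts.length :=
  List.toFinset_card_of_nodup he.1

theorem ValidElem.elemLen_le_card_elemVerts (he : ValidElem A e) :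
    elemLen e ≤ (elemVerts e).card := by
  rw [he.card_elemVerts, elemLen]
  split <;> omega

theorem ValidElem.card_elemVerts_le (he : ValidElem A e) :
    (elemVerts e).card ≤ elemLen e + 1 := by
  rw [he.card_elemVerts, elemLen]
  split <;> omega

/-- The last vertex of a path has an in-arc, so it lies outside `B`. -/
theorem FeasElem.exists_isDlvu (hB : ∀ v u, A v u → u ∉ B) (hval : ValidElem A e)
    (hf : FeasElem B lp lc e) :
    ∃ v u, IsDlvu v u (elemLen e) e ∧ u ∉ B ∧
      (v ∈ B ∧ elemLen e ≤ lp ∨ v = u ∧ elemLen e ≤ lc) := by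
  have hne := hval.verts_ne_nil_s12
  have hlen := hval.2.2.1
  rcases hf with ⟨hc, ⟨b, hb, hhead⟩, hl⟩ | ⟨hc, hnotB, hl⟩
  · have hu := hval.getLast_notMem_s12 hB
    have hbu : b ≠ e.verts.getLast hne := fun h => hu (h ▸ hb)
    refine ⟨b, _, ?_, hu, Or.inl ⟨hb, by simpa [elemLen, hc] using hl⟩⟩
    rw [IsDlvu, if_neg hbu]
    exact ⟨hc, hhead, List.getLast?_eq_some_getLast hne, by simp [elemLen, hc]; omega⟩
  · refine ⟨_, _, ?_, hnotB _ (List.head_mem hne),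
      Or.inr ⟨rfl, by simpa [elemLen, hc] using hl⟩⟩
    rw [IsDlvu, if_pos rfl]
    exact ⟨hc, List.head_mem hne, by simp [elemLen, hc]⟩

theorem IsDlvu.feasElem_of_mem_of_ne {v u : V} (he : IsDlvu v u l e) (hv : v ∈ B) (hvu : v ≠ u)
    (hl : l ≤ lp) : FeasElem B lp lc e := by
  rw [IsDlvu, if_neg hvu] at he
  obtain ⟨hc, hhead, -, hlen⟩ := he
  exact Or.inl ⟨hc, ⟨v, hv, hhead⟩, by omega⟩

theorem IsDlvu.feasElem_of_semiElem {v : V} (he : IsDlvu v v l e) (hs : SemiElem B lp lc e) :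
    FeasElem B lp lc e := by
  rw [IsDlvu, if_pos rfl] at he
  rcases hs with hf | ⟨hc, -⟩
  · exact hf
  · simp [he.1] at hc

end DecidableEq

end Elements

section Packings

variable {V : Type*} [DecidableEq V] {A : V → V → Prop} {B : Set V} {lp lc : ℕ}
  {D D' : Finset (PCElem V)}

theorem IsPacking.mono (hD : IsPacking A D) (hsub : D' ⊆ D) : IsPacking A D' :=
  ⟨fun e he => hD.1 e (hsub he), hD.2.mono (Finset.coe_subset.2 hsub)⟩

theorem FeasPacking.mono (hD : FeasPacking A B lp lc D) (hsub : D' ⊆ D) :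
    FeasPacking A B lp lc D' :=
  ⟨hD.1.mono hsub, fun e he => hD.2 e (hsub he)⟩

theorem IsPacking.card_packVerts (hD : IsPacking A D) :
    (packVerts D).card = ∑ e ∈ D, (elemVerts e).card :=
  Finset.card_biUnion hD.2

theorem IsPacking.packLen_le_card_packVerts (hD : IsPacking A D) :
    packLen D ≤ (packVerts D).card := by
  rw [hD.card_packVerts]
  exact Finset.sum_le_sum fun e he => (hD.1 e he).elemLen_le_card_elemVerts

theorem IsPacking.card_packVerts_le (hD : IsPacking A D) :
    (packVerts D).card ≤ packLen D + D.card := by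
  rw [hD.card_packVerts, Finset.card_eq_sum_ones, packLen, ← Finset.sum_add_distrib]
  exact Finset.sum_le_sum fun e he => (hD.1 e he).card_elemVerts_le

theorem FeasPacking.exists_subpacking_card_le {t : ℕ} (hD : FeasPacking A B lp lc D)
    (hlp : lp < t) (hlc : lc < t) (ht : t ≤ packLen D) :
    ∃ D' ⊆ D, t ≤ packLen D' ∧ (packVerts D').card ≤ 2 * t := by
  obtain ⟨D', hsub, hle, hmin⟩ := Finset.exists_minimal_subset_le_sum elemLen t D ht
  have hD' := hD.mono hsub
  have hlt : ∀ e ∈ D', elemLen e < t := fun e he =>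
    ((hD'.2 e he).elemLen_le_max).trans_lt (max_lt hlp hlc)
  have := Finset.sum_add_card_le_two_mul hle hlt hmin
  exact ⟨D', hsub, hle, hD'.1.card_packVerts_le.trans this⟩

theorem FeasPacking.packVerts_mem_FFp {e : PCElem V} {v u : V} (hD : FeasPacking A B lp lc D)
    (he : e ∈ D) (hvu : IsDlvu v u (elemLen e) e) :
    packVerts D ∈ FFp A B lp lc (packLen D) (elemLen e) (packVerts D).card v u :=
  ⟨⟨D, e, hD.1, he, hvu, Or.inl (hD.2 e he), fun f hf _ => hD.2 f hf, rfl, rfl⟩, rfl⟩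

theorem exists_feasPacking_of_mem_FF {k l : ℕ} {v u : V} {S : Finset V}
    (hS : S ∈ FF A B lp lc k l v u)
    (hfeas : ∀ e, IsDlvu v u l e → SemiElem B lp lc e → FeasElem B lp lc e) :
    ∃ D, FeasPacking A B lp lc D ∧ packLen D = k := by
  obtain ⟨D, e, hD, he, hvu, hs, hothers, hlen, -⟩ := hS
  refine ⟨D, ⟨hD, fun f hf => ?_⟩, hlen⟩
  by_cases hfe : f = e
  · exact hfe ▸ hfeas e hvu hs
  · exact hothers f hf hfe

end Packings

theorem IsRepS.nonempty {V : Type*} [DecidableEq V] {q : ℕ} {Shat S : Set (Finset V)}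
    (h : IsRepS q Shat S) (hS : S.Nonempty) : Shat.Nonempty := by
  obtain ⟨X, hX⟩ := hS
  obtain ⟨Xhat, hXhat, -⟩ := h.2 ∅ (by simp) ⟨X, hX, Finset.disjoint_empty_right X⟩
  exact ⟨Xhat, hXhat⟩

theorem yes_iff_rep_nonempty_general {V : Type*} [DecidableEq V]
    (A : V → V → Prop) (B : Set V) (lp lc t : ℕ)
    (hB : ∀ v u, A v u → u ∉ B)
    (ht : 0 < t) (hlp : lp < t) (hlc : lc < t)
    (Fhat : ℕ → ℕ → ℕ → V → V → Set (Finset V))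
    (hrep : ∀ k l p : ℕ, ∀ v u : V,
      1 ≤ k → k ≤ p → p ≤ 2 * t → 1 ≤ l → l ≤ max lp lc → u ∉ B →
      IsRepS (2 * t - p) (Fhat k l p v u) (FFp A B lp lc k l p v u)) :
    (∃ D : Finset (PCElem V), FeasPacking A B lp lc D ∧ t ≤ packLen D) ↔
      (∃ (k l p : ℕ) (v u : V), (Fhat k l p v u).Nonempty ∧ 1 ≤ l ∧
        ((t ≤ k ∧ k ≤ p ∧ p ≤ 2 * t ∧ v ∈ B ∧ u ∉ B ∧ l ≤ lp) ∨
         (t ≤ k ∧ k ≤ p ∧ p ≤ 2 * t ∧ v = u ∧ u ∉ B ∧ l ≤ lc))) := by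
  constructor
  · rintro ⟨D₀, hD₀, hlen₀⟩
    obtain ⟨D, hsub, hlen, hcard⟩ := hD₀.exists_subpacking_card_le hlp hlc hlen₀
    have hD := hD₀.mono hsub
    obtain ⟨e, he⟩ := Finset.nonempty_of_sum_ne_zero (ht.trans_le hlen).ne'
    have hvalid := hD.1.1 e he
    obtain ⟨v, u, hvu, hu, hcase⟩ := (hD.2 e he).exists_isDlvu hB hvalid
    have hk := hD.1.packLen_le_card_packVerts
    have hne := (hrep _ _ _ v u (ht.trans_le hlen) hk hcard hvalid.one_le_elemLen
      (hD.2 e he).elemLen_le_max hu).nonempty ⟨_, hD.packVerts_mem_FFp he hvu⟩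
    refine ⟨_, _, _, v, u, hne, hvalid.one_le_elemLen, ?_⟩
    rcases hcase with ⟨hv, hl⟩ | ⟨rfl, hl⟩
    · exact Or.inl ⟨hlen, hk, hcard, hv, hu, hl⟩
    · exact Or.inr ⟨hlen, hk, hcard, rfl, hu, hl⟩
  · rintro ⟨k, l, p, v, u, ⟨S, hS⟩, hl, hcase⟩
    rcases hcase with ⟨htk, hkp, hpt, hv, hu, hlp'⟩ | ⟨htk, hkp, hpt, rfl, hu, hlc'⟩
    · have hvu : v ≠ u := fun h => hu (h ▸ hv)
      have hSF := ((hrep k l p v u (ht.trans_le htk) hkp hpt hl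
        (le_max_of_le_left hlp') hu).1 hS).1
      obtain ⟨D, hD, rfl⟩ := exists_feasPacking_of_mem_FF hSF fun e he _ =>
        he.feasElem_of_mem_of_ne hv hvu hlp'
      exact ⟨D, hD, htk⟩
    · have hSF := ((hrep k l p v v (ht.trans_le htk) hkp hpt hl
        (le_max_of_le_right hlc') hu).1 hS).1
      obtain ⟨D, hD, rfl⟩ := exists_feasPacking_of_mem_FF hSF fun e he hs =>
        he.feasElem_of_semiElem hs
      exact ⟨D, hD, htk⟩

/-- (Lemma 7) Suppose for every tuple `(k,l,p,v,u)` with `1 ≤ k ≤ p ≤ 2t`,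
`1 ≤ l ≤ max l_p l_c`, `u ∉ B`, a `(2t-p)`-representative subfamily
`F̂_{k,l,p}^{vu}` of `F_{k,l,p}^{vu}` is given. Then, assuming `l_p, l_c < t`,
the instance is a yes-instance iff some `F̂_{k,l,p}^{vu}` with the stated index
conditions is nonempty. -/
theorem yes_iff_rep_nonempty {V : Type*} [Fintype V] [DecidableEq V]
    (A : V → V → Prop) (B : Set V) (lp lc t : ℕ)
    (hloop : ∀ v, ¬ A v v) (hB : ∀ v u, A v u → u ∉ B)
    (ht : 0 < t) (hlp : lp < t) (hlc : lc < t)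
    (Fhat : ℕ → ℕ → ℕ → V → V → Set (Finset V))
    (hrep : ∀ k l p : ℕ, ∀ v u : V,
      1 ≤ k → k ≤ p → p ≤ 2 * t → 1 ≤ l → l ≤ max lp lc → u ∉ B →
      IsRepS (2 * t - p) (Fhat k l p v u) (FFp A B lp lc k l p v u)) :
    (∃ D : Finset (PCElem V), FeasPacking A B lp lc D ∧ t ≤ packLen D) ↔
      (∃ (k l p : ℕ) (v u : V), (Fhat k l p v u).Nonempty ∧ 1 ≤ l ∧
        ((t ≤ k ∧ k ≤ p ∧ p ≤ 2 * t ∧ v ∈ B ∧ u ∉ B ∧ l ≤ lp) ∨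
         (t ≤ k ∧ k ≤ p ∧ p ≤ 2 * t ∧ v = u ∧ u ∉ B ∧ l ≤ lc))) :=
  yes_iff_rep_nonempty_general A B lp lc t hB ht hlp hlc Fhat hrep
end
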